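/- arXiv:2203.07557 — 7 statements merged into one kernel-verified Lean document; each statement's English description precedes it below -/
import Mathlib

section
/- Let n, d ≥ 1 and p ≥ 1 be integers, and let t_1, …, t_n ∈ ℝ. Let A ∈ ℝ^{n×d} be the Vandermonde matrix with rows a_i = (1, t_i, t_i^2, …, t_i^{d-1}), and let M ∈ ℝ^{n×(p(d-1)+1)} be the Vandermonde matrix with rows m_i = (1, t_i, t_i^2, …, t_i^{p(d-1)}). Then there exists a function f : ℝ^d → ℝ^{p(d-1)+1}, independent of i, such that for every i ∈ {1,…,n} and every x ∈ ℝ^d, ⟨a_i, x⟩^p = ⟨m_i, f(x)⟩, and consequently |⟨a_i, x⟩|^p = |⟨m_i, f(x)⟩|. Hence the rank of the ℓ_p regression problem on a Vandermonde matrix A ∈ ℝ^{n×d} is at most p(d-1)+1 = O(dp). -/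
/-!
Expanding `(∑ j < d, x_j t^j)^p` as a polynomial in `t` gives a polynomial of degree at most
`p(d-1)` whose coefficients depend only on `x`. Taking `f(x)` to be its coefficient vector,
`⟨a_i, x⟩^p` is the evaluation of that polynomial at `t_i`, which is `⟨m_i, f(x)⟩`.
-/

open Polynomial

namespace Polynomial

variable {R : Type*} [CommSemiring R]

noncomputable def ofFinCoeffs {d : ℕ} (x : Fin d → R) : R[X] :=
  ∑ j : Fin d, C (x j) * X ^ (j : ℕ)

theorem natDegree_ofFinCoeffs_le {d : ℕ} (x : Fin d → R) : (ofFinCoeffs x).natDegree ≤ d - 1 :=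
  natDegree_sum_le_of_forall_le _ _ fun j _ =>
    (natDegree_C_mul_X_pow_le (x j) j).trans (Nat.le_sub_one_of_lt j.isLt)

theorem eval_ofFinCoeffs {d : ℕ} (x : Fin d → R) (t : R) :
    (ofFinCoeffs x).eval t = ∑ j : Fin d, t ^ (j : ℕ) * x j := by
  simp only [ofFinCoeffs, eval_finsetSum, eval_mul, eval_C, eval_pow, eval_X, mul_comm]

theorem eval_eq_sum_fin {q : R[X]} {N : ℕ} (hq : q.natDegree < N) (t : R) :
    q.eval t = ∑ k : Fin N, t ^ (k : ℕ) * q.coeff k := by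
  rw [eval_eq_sum_range' hq, ← Fin.sum_univ_eq_sum_range]
  simp only [mul_comm]

theorem sum_pow_mul_pow_eq_sum_coeff {d : ℕ} (x : Fin d → R) (p : ℕ) (t : R) :
    (∑ j : Fin d, t ^ (j : ℕ) * x j) ^ p =
      ∑ k : Fin (p * (d - 1) + 1), t ^ (k : ℕ) * (ofFinCoeffs x ^ p).coeff k := by
  have hdeg : (ofFinCoeffs x ^ p).natDegree < p * (d - 1) + 1 :=
    Nat.lt_succ_of_le (natDegree_pow_le_of_le p (natDegree_ofFinCoeffs_le x))
  rw [← eval_eq_sum_fin hdeg, eval_pow, eval_ofFinCoeffs]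

end Polynomial

theorem vandermonde_lp_regression_rank_general (n d p : ℕ)
    (t : Fin n → ℝ)
    (A : Matrix (Fin n) (Fin d) ℝ) (hA : ∀ i j, A i j = t i ^ (j : ℕ))
    (M : Matrix (Fin n) (Fin (p * (d - 1) + 1)) ℝ)
    (hM : ∀ i k, M i k = t i ^ (k : ℕ)) :
    ∃ f : (Fin d → ℝ) → (Fin (p * (d - 1) + 1) → ℝ),
      ∀ (i : Fin n) (x : Fin d → ℝ),
        ((∑ j, A i j * x j) ^ p = ∑ k, M i k * f x k) ∧
        |∑ j, A i j * x j| ^ p = |∑ k, M i k * f x k| := by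
  refine ⟨fun x k => (ofFinCoeffs x ^ p).coeff k, fun i x => ?_⟩
  have hpow : (∑ j, A i j * x j) ^ p = ∑ k, M i k * (ofFinCoeffs x ^ p).coeff k := by
    simp only [hA, hM]
    exact sum_pow_mul_pow_eq_sum_coeff x p (t i)
  exact ⟨hpow, by rw [← abs_pow, hpow]⟩

/-- The rank of the ℓ_p regression problem on a Vandermonde matrix
`A ∈ ℝ^{n×d}` is at most `p(d-1)+1 = O(dp)`: with `M` the Vandermonde matrix
on the same bases with `p(d-1)+1` columns, there is a fixed function `f`
(independent of `i`) with `⟨a_i, x⟩^p = ⟨m_i, f(x)⟩` and hence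
`|⟨a_i, x⟩|^p = |⟨m_i, f(x)⟩|` for all `i` and all `x`. -/
theorem vandermonde_lp_regression_rank (n d p : ℕ)
    (hn : 1 ≤ n) (hd : 1 ≤ d) (hp : 1 ≤ p)
    (t : Fin n → ℝ)
    (A : Matrix (Fin n) (Fin d) ℝ) (hA : ∀ i j, A i j = t i ^ (j : ℕ))
    (M : Matrix (Fin n) (Fin (p * (d - 1) + 1)) ℝ)
    (hM : ∀ i k, M i k = t i ^ (k : ℕ)) :
    ∃ f : (Fin d → ℝ) → (Fin (p * (d - 1) + 1) → ℝ),
      ∀ (i : Fin n) (x : Fin d → ℝ),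
        ((∑ j, A i j * x j) ^ p = ∑ k, M i k * f x k) ∧
        |∑ j, A i j * x j| ^ p = |∑ k, M i k * f x k| :=
  vandermonde_lp_regression_rank_general n d p t A hA M hM
end

section
/- Let n, d ≥ 1, 1 ≤ s ≤ d, and p ≥ 0 be integers, and let a_1, …, a_n ∈ ℝ^d be vectors each having at most s nonzero entries. Set T = C(d,s) · s^p, where C(d,s) is the binomial coefficient. Then there exist a matrix M ∈ ℝ^{n×T} with rows m_1, …, m_n and a function f : ℝ^d → ℝ^T, with f independent of i, such that for every i ∈ {1,…,n} and every x ∈ ℝ^d, ⟨a_i, x⟩^p = ⟨m_i, f(x)⟩. In particular, the rank of the ℓ_p regression problem on an s-sparse matrix A ∈ ℝ^{n×d} is at most C(d,s) · s^p = O(d^s s^p). -/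
/-!
Pad the support of each row `a` to a set `T` of exactly `s` coordinates. Then `⟨a, x⟩` only involves
the coordinates in `T`, and multiplying out `⟨a, x⟩ ^ p` gives a sum over the `s ^ p` words
`t : Fin p → T` of `(∏ k, a (t k)) * (∏ k, x (t k))`. The monomials `∏ k, x (t k)`, over all
`C(d, s)` choices of `T`, form a feature map `f` that does not depend on the row; the row only
selects its own `T` and supplies the coefficients `∏ k, a (t k)`.
-/

abbrev SparseWord (ι : Type*) (s p : ℕ) :=
  Σ T : {T : Finset ι // T.card = s}, Fin p → T.1

namespace SparseWord

variable {ι R : Type*} {s p : ℕ}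

lemma card [Fintype ι] :
    Fintype.card (SparseWord ι s p) = (Fintype.card ι).choose s * s ^ p := by
  simp only [Fintype.card_sigma, Fintype.card_fun, Fintype.card_coe, Fintype.card_fin]
  rw [Finset.sum_congr rfl fun T _ => by rw [T.2]]
  simp [Fintype.card_finset_len]

variable [CommSemiring R] [DecidableEq ι]

def monomial (x : ι → R) (w : SparseWord ι s p) : R :=
  ∏ k, x (w.2 k)

def coeff (a : ι → R) (T : {T : Finset ι // T.card = s}) (w : SparseWord ι s p) : R :=
  if w.1 = T then monomial a w else 0

lemma pow_sum_mul_eq_sum_coeff_mul_monomial [Fintype ι] (a x : ι → R)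
    (T : {T : Finset ι // T.card = s}) (haT : Function.support a ⊆ T.1) :
    (∑ j, a j * x j) ^ p = ∑ w : SparseWord ι s p, coeff a T w * monomial x w := by
  have h_sum_on_T : ∑ j, a j * x j = ∑ j : T.1, a j * x j := by
    rw [Finset.sum_coe_sort T.1 fun j => a j * x j]
    refine (Finset.sum_subset (Finset.subset_univ _) fun j _ hj => ?_).symm
    rw [Function.notMem_support.mp fun hj' => hj (haT hj'), zero_mul]
  rw [h_sum_on_T, Fintype.sum_pow, Fintype.sum_sigma, Finset.sum_eq_single T]
  · simp [coeff, monomial, Finset.prod_mul_distrib]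
  · intro T' _ hT'
    simp [coeff, hT']
  · simp

end SparseWord

theorem sparse_lp_regression_rank_general (n d s p : ℕ)
    (hsd : s ≤ d)
    (a : Fin n → (Fin d → ℝ))
    (ha : ∀ i, (Finset.univ.filter fun j => a i j ≠ 0).card ≤ s) :
    ∃ (M : Fin n → Fin (Nat.choose d s * s ^ p) → ℝ)
      (f : (Fin d → ℝ) → Fin (Nat.choose d s * s ^ p) → ℝ),
      ∀ (i : Fin n) (x : Fin d → ℝ),
        (∑ j, a i j * x j) ^ p = ∑ kk, M i kk * f x kk := by
  classical
  have h_pad : ∀ i, ∃ T : Finset (Fin d), (Finset.univ.filter fun j => a i j ≠ 0) ⊆ T ∧ T.card = s :=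
    fun i => Finset.exists_superset_card_eq (ha i) (by simpa using hsd)
  choose T hT_supp hT_card using h_pad
  let e : Fin (d.choose s * s ^ p) ≃ SparseWord (Fin d) s p :=
    (Fintype.equivFinOfCardEq (by simpa using SparseWord.card (ι := Fin d) (s := s) (p := p))).symm
  refine ⟨fun i k => SparseWord.coeff (a i) ⟨T i, hT_card i⟩ (e k),
    fun x k => SparseWord.monomial x (e k), fun i x => ?_⟩
  rw [SparseWord.pow_sum_mul_eq_sum_coeff_mul_monomial (a i) x ⟨T i, hT_card i⟩
    fun j hj => hT_supp i (by simpa using hj)]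
  exact (e.sum_comp fun w => SparseWord.coeff (a i) ⟨T i, hT_card i⟩ w * SparseWord.monomial x w).symm

/-- If each row `a_i ∈ ℝ^d` has at most `s` nonzero entries
(`1 ≤ s ≤ d`), then with `T = C(d,s)·s^p` there exist a matrix `M ∈ ℝ^{n×T}`
and a function `f : ℝ^d → ℝ^T` (independent of `i`) such that
`⟨a_i, x⟩^p = ⟨m_i, f(x)⟩` for all `i` and `x`. In particular the rank of the
ℓ_p regression problem on an `s`-sparse matrix is at most `C(d,s)·s^p`. -/
theorem sparse_lp_regression_rank (n d s p : ℕ)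
    (hn : 1 ≤ n) (hs : 1 ≤ s) (hsd : s ≤ d)
    (a : Fin n → (Fin d → ℝ))
    (ha : ∀ i, (Finset.univ.filter fun j => a i j ≠ 0).card ≤ s) :
    ∃ (M : Fin n → Fin (Nat.choose d s * s ^ p) → ℝ)
      (f : (Fin d → ℝ) → Fin (Nat.choose d s * s ^ p) → ℝ),
      ∀ (i : Fin n) (x : Fin d → ℝ),
        (∑ j, a i j * x j) ^ p = ∑ kk, M i kk * f x kk :=
  sparse_lp_regression_rank_general n d s p hsd a ha
end

section
/- Let n, d, k ≥ 1, 1 ≤ s ≤ d, and p ≥ 0 be integers. Let v_1, …, v_k ∈ ℝ^d, and suppose that each row a_i ∈ ℝ^d of a matrix A ∈ ℝ^{n×d} can be written as a_i = κ_i + σ_i, where κ_i lies in the span of v_1, …, v_k and σ_i has at most s nonzero entries. Set T = C(d,s) · (k+s)^p, where C(d,s) is the binomial coefficient. Then there exist a matrix M ∈ ℝ^{n×T} with rows m_1, …, m_n and a function f : ℝ^d → ℝ^T, with f independent of i, such that for every i ∈ {1,…,n} and every x ∈ ℝ^d, ⟨a_i, x⟩^p = ⟨m_i, f(x)⟩.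 In particular, the rank of the ℓ_p regression problem on the sum of a rank-k matrix and an s-sparse matrix is at most C(d,s) · (k+s)^p. -/
/-!
Pad the support of each sparse part `σ i` to a set `S i` of exactly `s` coordinates. Then
`⟨a i, x⟩` is a linear combination of the `k + s` linear forms `⟨v l, x⟩` and `x j`, `j ∈ S i`,
so its `p`-th power is a combination of the `(k + s) ^ p` products of `p` of them. Taking as
features these products for every one of the `C(d, s)` sets `S`, and letting the coefficients of
row `i` vanish outside the block of `S i`, gives one feature map `f` for all rows.
-/

open Finset

section Features

variable {m ι R : Type*} [Fintype m] [CommSemiring R]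

theorem exists_dotProduct_eq_sum_of_mem_span [Fintype ι] {v : ι → m → R} {κ : m → R}
    (hκ : κ ∈ Submodule.span R (Set.range v)) :
    ∃ c : ι → R, ∀ x, κ ⬝ᵥ x = ∑ l, c l * (v l ⬝ᵥ x) := by
  obtain ⟨c, rfl⟩ := (Submodule.mem_span_range_iff_exists_fun R).mp hκ
  exact ⟨c, fun x => by simp only [sum_dotProduct, smul_dotProduct, smul_eq_mul]⟩

theorem dotProduct_eq_sum_orderEmbOfFin [LinearOrder m] {σ : m → R} {S : Finset m} {s : ℕ}
    (hS : S.card = s) (hσ : ∀ j ∉ S, σ j = 0) (x : m → R) :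
    σ ⬝ᵥ x = ∑ t : Fin s, σ (S.orderEmbOfFin hS t) * x (S.orderEmbOfFin hS t) := by
  refine (Fintype.sum_of_injective _ (S.orderEmbOfFin hS).injective _ _ ?_ fun _ => rfl).symm
  intro j hj
  rw [hσ j (by simpa using hj), zero_mul]

def lowRankSparseFeature [LinearOrder m] (v : ι → m → R) {s : ℕ}
    (S : {S : Finset m // S.card = s}) : ι ⊕ Fin s → (m → R) → R :=
  Sum.elim (fun l x => v l ⬝ᵥ x) (fun t x => x (S.1.orderEmbOfFin S.2 t))

theorem exists_dotProduct_eq_sum_lowRankSparseFeature [Fintype ι] [LinearOrder m]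
    {v : ι → m → R} {κ σ : m → R} {s : ℕ} (S : {S : Finset m // S.card = s})
    (hκ : κ ∈ Submodule.span R (Set.range v)) (hσ : ∀ j ∉ S.1, σ j = 0) :
    ∃ c : ι ⊕ Fin s → R, ∀ x,
      (κ + σ) ⬝ᵥ x = ∑ j, c j * lowRankSparseFeature v S j x := by
  obtain ⟨c, hc⟩ := exists_dotProduct_eq_sum_of_mem_span hκ
  refine ⟨Sum.elim c fun t => σ (S.1.orderEmbOfFin S.2 t), fun x => ?_⟩
  rw [add_dotProduct, hc, dotProduct_eq_sum_orderEmbOfFin S.2 hσ, Fintype.sum_sum_type]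
  rfl

end Features

section Factorization

variable {α X Idx R : Type*} [CommSemiring R]

theorem exists_fin_card_factorization [Fintype Idx] {g : α → X → R}
    (h : ∃ (M : α → Idx → R) (f : X → Idx → R), ∀ i x, g i x = ∑ t, M i t * f x t) :
    ∃ (M : α → Fin (Fintype.card Idx) → R) (f : X → Fin (Fintype.card Idx) → R),
      ∀ i x, g i x = ∑ t, M i t * f x t := by
  obtain ⟨M, f, hMf⟩ := h
  let e := Fintype.equivFin Idx
  refine ⟨fun i t => M i (e.symm t), fun x t => f x (e.symm t), fun i x => ?_⟩
  rw [hMf, ← e.symm.sum_comp]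

theorem exists_pow_factorization_of_eq_sum {Q ι : Type*} [Fintype Q] [DecidableEq Q]
    [Fintype ι] (p : ℕ) {g : α → X → R} (q : α → Q) (b : Q → ι → X → R) (c : α → ι → R)
    (h : ∀ i x, g i x = ∑ j, c i j * b (q i) j x) :
    ∃ (M : α → Q × (Fin p → ι) → R) (f : X → Q × (Fin p → ι) → R),
      ∀ i x, g i x ^ p = ∑ t, M i t * f x t := by
  refine ⟨fun i t => if t.1 = q i then ∏ r, c i (t.2 r) else 0,
    fun x t => ∏ r, b t.1 (t.2 r) x, fun i x => ?_⟩
  simp only [h, Fintype.sum_pow, Fintype.sum_prod_type, ite_mul, zero_mul, sum_ite_irrel,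
    sum_const_zero, sum_ite_eq', mem_univ, if_true, prod_mul_distrib]

end Factorization

theorem lowrank_plus_sparse_lp_regression_rank_general (n d k s p : ℕ)
    (hsd : s ≤ d)
    (v : Fin k → (Fin d → ℝ))
    (a κ σ : Fin n → (Fin d → ℝ))
    (hsum : ∀ i, a i = κ i + σ i)
    (hκ : ∀ i, κ i ∈ Submodule.span ℝ (Set.range v))
    (hσ : ∀ i, (Finset.univ.filter fun j => σ i j ≠ 0).card ≤ s) :
    ∃ (M : Fin n → Fin (Nat.choose d s * (k + s) ^ p) → ℝ)
      (f : (Fin d → ℝ) → Fin (Nat.choose d s * (k + s) ^ p) → ℝ),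
      ∀ (i : Fin n) (x : Fin d → ℝ),
        (∑ j, a i j * x j) ^ p = ∑ kk, M i kk * f x kk := by
  have hsupport (i : Fin n) :
      ∃ S : {S : Finset (Fin d) // S.card = s}, ∀ j ∉ S.1, σ i j = 0 := by
    obtain ⟨S, hsub, hcard⟩ := Finset.exists_superset_card_eq (hσ i) (by simpa using hsd)
    exact ⟨⟨S, hcard⟩, fun j hj => by_contra fun hj' => hj (hsub (by simpa using hj'))⟩
  choose S hS using hsupport
  choose c hc using fun i => exists_dotProduct_eq_sum_lowRankSparseFeature (S i) (hκ i) (hS i)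
  have hcard : Fintype.card ({S : Finset (Fin d) // S.card = s} × (Fin p → Fin k ⊕ Fin s))
      = Nat.choose d s * (k + s) ^ p := by
    simp [Fintype.card_finset_len]
  rw [← hcard]
  refine exists_fin_card_factorization (g := fun i x => (a i ⬝ᵥ x) ^ p) ?_
  exact exists_pow_factorization_of_eq_sum p S (lowRankSparseFeature v) c
    fun i x => by rw [hsum, hc]

/-- If each row `a_i = κ_i + σ_i` where `κ_i` lies in the span of
`v_1, …, v_k` and `σ_i` has at most `s` nonzero entries, then with
`T = C(d,s)·(k+s)^p` there exist a matrix `M ∈ ℝ^{n×T}` and a function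
`f : ℝ^d → ℝ^T` (independent of `i`) with `⟨a_i, x⟩^p = ⟨m_i, f(x)⟩` for all
`i, x`. In particular the rank of the ℓ_p regression problem on the sum of a
rank-`k` matrix and an `s`-sparse matrix is at most `C(d,s)·(k+s)^p`. -/
theorem lowrank_plus_sparse_lp_regression_rank (n d k s p : ℕ)
    (hn : 1 ≤ n) (hk : 1 ≤ k) (hs : 1 ≤ s) (hsd : s ≤ d)
    (v : Fin k → (Fin d → ℝ))
    (a κ σ : Fin n → (Fin d → ℝ))
    (hsum : ∀ i, a i = κ i + σ i)
    (hκ : ∀ i, κ i ∈ Submodule.span ℝ (Set.range v))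
    (hσ : ∀ i, (Finset.univ.filter fun j => σ i j ≠ 0).card ≤ s) :
    ∃ (M : Fin n → Fin (Nat.choose d s * (k + s) ^ p) → ℝ)
      (f : (Fin d → ℝ) → Fin (Nat.choose d s * (k + s) ^ p) → ℝ),
      ∀ (i : Fin n) (x : Fin d → ℝ),
        (∑ j, a i j * x j) ^ p = ∑ kk, M i kk * f x kk :=
  lowrank_plus_sparse_lp_regression_rank_general n d k s p hsd v a κ σ hsum hκ hσ
end

section
/- Let n, d ≥ 1, 1 ≤ s ≤ d, and p ≥ 0 be integers, and let t_1, …, t_n ∈ ℝ. Suppose each row a_i ∈ ℝ^d of a matrix A ∈ ℝ^{n×d} can be written as a_i = v_i + σ_i, where v_i = (1, t_i, t_i^2, …, t_i^{d-1}) is a Vandermonde row and σ_i ∈ ℝ^d has at most s nonzero entries. Set T = (p+1) · (p(d-1)+1) · C(d,s) · s^p, where C(d,s) is the binomial coefficient. Then there exist a matrix M ∈ ℝ^{n×T} with rows m_1, …, m_n and a function f : ℝ^d → ℝ^T, with f independent of i, such that for every i ∈ {1,…,n} and every x ∈ ℝ^d, ⟨a_i, x⟩^p = ⟨m_i, f(x)⟩.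 In particular, the rank of the ℓ_p regression problem on the sum of a Vandermonde matrix and an s-sparse matrix is at most (p+1)(p(d-1)+1) · C(d,s) · s^p. -/
/-!
Write `⟨a_i, x⟩ = P_x(t_i) + ⟨σ_i, x⟩` with `P_x(z) = ∑ⱼ xⱼ zʲ` and expand the `p`-th power
binomially. The power `P_x(t_i)^k` is a polynomial of degree at most `p(d-1)` in `t_i` whose
coefficients depend only on `x`. The power `⟨σ_i, x⟩^q` only sees the coordinates in a set
`S_i ⊇ supp σ_i` of size `s`: choosing `S_i` among `C(d,s)` sets and expanding the power into
`s^q` monomials separates it. Separable ranks multiply under products and add under sums.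
-/

open Finset Polynomial

/-- The rank of the `ℓ_p` regression problem on `A` is the least `T` with
`SeparableRankLE (fun i x => |⟨a_i, x⟩| ^ p) T`. -/
def SeparableRankLE {ι X R : Type*} [CommSemiring R] (F : ι → X → R) (T : ℕ) : Prop :=
  ∃ (M : ι → Fin T → R) (f : X → Fin T → R), ∀ i x, F i x = ∑ k, M i k * f x k

namespace SeparableRankLE

variable {ι X R : Type*} [CommSemiring R] {F G : ι → X → R} {T T' : ℕ}

theorem of_fintype {κ : Type*} [Fintype κ] (M : ι → κ → R) (f : X → κ → R)
    (h : ∀ i x, F i x = ∑ k, M i k * f x k) : SeparableRankLE F (Fintype.card κ) := by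
  let e := (Fintype.equivFin κ).symm
  exact ⟨fun i k => M i (e k), fun x k => f x (e k), fun i x => by
    rw [h, e.sum_comp fun k => M i k * f x k]⟩

theorem congr (h : SeparableRankLE F T) (hFG : ∀ i x, F i x = G i x) : SeparableRankLE G T := by
  rwa [← funext₂ hFG]

theorem mono (h : SeparableRankLE F T) (hT : T ≤ T') : SeparableRankLE F T' := by
  obtain ⟨c, rfl⟩ := Nat.exists_eq_add_of_le hT
  obtain ⟨M, f, h⟩ := h
  exact ⟨fun i => Fin.append (M i) 0, fun x => Fin.append (f x) 0, fun i x => by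
    simp [Fin.sum_univ_add, h]⟩

theorem mul_left (c : ι → R) (h : SeparableRankLE F T) :
    SeparableRankLE (fun i x => c i * F i x) T := by
  obtain ⟨M, f, h⟩ := h
  exact ⟨fun i k => c i * M i k, f, fun i x => by simp [h, Finset.mul_sum, mul_assoc]⟩

theorem mul {T₁ T₂ : ℕ} (hF : SeparableRankLE F T₁) (hG : SeparableRankLE G T₂) :
    SeparableRankLE (fun i x => F i x * G i x) (T₁ * T₂) := by
  obtain ⟨M, f, hF⟩ := hF
  obtain ⟨N, g, hG⟩ := hG
  simpa using of_fintype (fun i (c : Fin T₁ × Fin T₂) => M i c.1 * N i c.2)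
    (fun x c => f x c.1 * g x c.2) fun i x => by
      rw [hF, hG, Finset.sum_mul_sum, Fintype.sum_prod_type]
      refine Finset.sum_congr rfl fun _ _ => Finset.sum_congr rfl fun _ _ => ?_
      ring

theorem pow (h : SeparableRankLE F T) (q : ℕ) :
    SeparableRankLE (fun i x => F i x ^ q) (T ^ q) := by
  induction q with
  | zero => rw [pow_zero]; exact ⟨fun _ _ => 1, fun _ _ => 1, by simp⟩
  | succ q ih => simpa only [pow_succ] using ih.mul h

theorem sum_univ {κ : Type*} [Fintype κ] {F : κ → ι → X → R}
    (h : ∀ k, SeparableRankLE (F k) T) :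
    SeparableRankLE (fun i x => ∑ k, F k i x) (Fintype.card κ * T) := by
  choose M f hMf using h
  simpa using of_fintype (fun i (c : κ × Fin T) => M c.1 i c.2) (fun x c => f c.1 x c.2)
    fun i x => by simp [hMf, Fintype.sum_prod_type]

theorem finset_sum_mul {κ : Type*} (c : ι → κ → R) (S : Finset κ) :
    SeparableRankLE (fun i (x : κ → R) => ∑ j ∈ S, c i j * x j) #S := by
  simpa using of_fintype (fun i (j : S) => c i j) (fun x j => x j)
    fun i x => (S.sum_coe_sort fun j => c i j * x j).symm

theorem eval_polynomial (t : ι → R) (P : X → R[X]) {N : ℕ}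
    (hP : ∀ x, (P x).natDegree ≤ N) :
    SeparableRankLE (fun i x => (P x).eval (t i)) (N + 1) :=
  ⟨fun i m => t i ^ (m : ℕ), fun x m => (P x).coeff m, fun i x => by
    show (P x).eval (t i) = _
    rw [eval_eq_sum_range' (Nat.lt_succ_of_le (hP x)),
      ← Fin.sum_univ_eq_sum_range fun m => (P x).coeff m * t i ^ m]
    simp only [mul_comm]⟩

theorem vandermonde_inner_pow (t : ι → R) (d k : ℕ) :
    SeparableRankLE (fun i (x : Fin d → R) => (∑ j : Fin d, t i ^ (j : ℕ) * x j) ^ k)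
      (k * (d - 1) + 1) := by
  let P : (Fin d → R) → R[X] := fun x => ∑ j : Fin d, C (x j) * X ^ (j : ℕ)
  have hdeg : ∀ x, (P x).natDegree ≤ d - 1 := fun x =>
    natDegree_sum_le_of_forall_le _ _ fun j _ =>
      (natDegree_C_mul_X_pow_le (x j) j).trans (by omega)
  refine (eval_polynomial t (fun x => P x ^ k) fun x =>
    natDegree_pow_le.trans (Nat.mul_le_mul_left k (hdeg x))).congr fun i x => ?_
  simp only [P, eval_pow, eval_finsetSum, eval_mul, eval_C, eval_X]
  simp_rw [mul_comm]

theorem sparse_inner_pow [DecidableEq R] {d s : ℕ} (σ : ι → Fin d → R)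
    (hσ : ∀ i, #{j | σ i j ≠ 0} ≤ s) (hsd : s ≤ d) (q : ℕ) :
    SeparableRankLE (fun i (x : Fin d → R) => (∑ j, σ i j * x j) ^ q)
      (d.choose s * s ^ q) := by
  choose S hS hScard using fun i => exists_superset_card_eq (hσ i) (by simpa using hsd)
  have hinner : ∀ i (x : Fin d → R), ∑ j ∈ S i, σ i j * x j = ∑ j, σ i j * x j :=
    fun i x => sum_subset (subset_univ _) fun j _ hj => by
      have hσj : σ i j = 0 := not_ne_iff.mp fun hne => hj (hS i (by simpa using hne))
      rw [hσj, zero_mul]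
  have hterm : ∀ K : powersetCard s (univ : Finset (Fin d)), SeparableRankLE
      (fun i (x : Fin d → R) => if S i = K then (∑ j ∈ K, σ i j * x j) ^ q else 0) (s ^ q) :=
    fun K => by
      simpa [(mem_powersetCard.mp K.2).2] using
        ((finset_sum_mul σ K).pow q).mul_left fun i => if S i = K then 1 else 0
  simpa using (sum_univ hterm).congr fun i x => by
    rw [sum_coe_sort (powersetCard s univ) fun K =>
      if S i = K then (∑ j ∈ K, σ i j * x j) ^ q else 0, sum_ite_eq]
    simp [hScard, hinner]

end SeparableRankLE

theorem vandermonde_plus_sparse_lp_regression_rank_general (n d s p : ℕ)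
    (hs : 1 ≤ s) (hsd : s ≤ d)
    (t : Fin n → ℝ)
    (a v σ : Fin n → (Fin d → ℝ))
    (hv : ∀ i j, v i j = t i ^ (j : ℕ))
    (hsum : ∀ i, a i = v i + σ i)
    (hσ : ∀ i, (Finset.univ.filter fun j => σ i j ≠ 0).card ≤ s) :
    ∃ (M : Fin n → Fin ((p + 1) * (p * (d - 1) + 1) * Nat.choose d s * s ^ p) → ℝ)
      (f : (Fin d → ℝ) → Fin ((p + 1) * (p * (d - 1) + 1) * Nat.choose d s * s ^ p) → ℝ),
      ∀ (i : Fin n) (x : Fin d → ℝ),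
        (∑ j, a i j * x j) ^ p = ∑ kk, M i kk * f x kk := by
  have hterm : ∀ k : Fin (p + 1), SeparableRankLE (fun i (x : Fin d → ℝ) =>
      (p.choose k : ℝ) * ((∑ j : Fin d, t i ^ (j : ℕ) * x j) ^ (k : ℕ) *
        (∑ j, σ i j * x j) ^ (p - k))) ((p * (d - 1) + 1) * (d.choose s * s ^ p)) := fun k =>
    (((SeparableRankLE.vandermonde_inner_pow t d k).mono (by gcongr; omega)).mul
      ((SeparableRankLE.sparse_inner_pow σ hσ hsd (p - k)).mono
        (Nat.mul_le_mul_left _ (Nat.pow_le_pow_right hs (Nat.sub_le p k))))).mul_left _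
  have hrank := SeparableRankLE.sum_univ hterm
  rw [Fintype.card_fin, ← mul_assoc, ← mul_assoc] at hrank
  refine hrank.congr fun i x => ?_
  simp only [hsum i, Pi.add_apply, add_mul, sum_add_distrib, hv, add_pow]
  rw [← Fin.sum_univ_eq_sum_range]
  exact Finset.sum_congr rfl fun k _ => by ring

/-- If each row `a_i = v_i + σ_i` where `v_i = (1, t_i, …, t_i^{d-1})`
is a Vandermonde row and `σ_i` has at most `s` nonzero entries, then with
`T = (p+1)·(p(d-1)+1)·C(d,s)·s^p` there exist a matrix `M ∈ ℝ^{n×T}` and a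
function `f : ℝ^d → ℝ^T` (independent of `i`) with `⟨a_i, x⟩^p = ⟨m_i, f(x)⟩`
for all `i, x`. In particular the rank of the ℓ_p regression problem on the
sum of a Vandermonde matrix and an `s`-sparse matrix is at most
`(p+1)(p(d-1)+1)·C(d,s)·s^p`. -/
theorem vandermonde_plus_sparse_lp_regression_rank (n d s p : ℕ)
    (hn : 1 ≤ n) (hs : 1 ≤ s) (hsd : s ≤ d)
    (t : Fin n → ℝ)
    (a v σ : Fin n → (Fin d → ℝ))
    (hv : ∀ i j, v i j = t i ^ (j : ℕ))
    (hsum : ∀ i, a i = v i + σ i)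
    (hσ : ∀ i, (Finset.univ.filter fun j => σ i j ≠ 0).card ≤ s) :
    ∃ (M : Fin n → Fin ((p + 1) * (p * (d - 1) + 1) * Nat.choose d s * s ^ p) → ℝ)
      (f : (Fin d → ℝ) → Fin ((p + 1) * (p * (d - 1) + 1) * Nat.choose d s * s ^ p) → ℝ),
      ∀ (i : Fin n) (x : Fin d → ℝ),
        (∑ j, a i j * x j) ^ p = ∑ kk, M i kk * f x kk :=
  vandermonde_plus_sparse_lp_regression_rank_general n d s p hs hsd t a v σ hv hsum hσ
end

section
/- Let n, d, q ≥ 1 and p ≥ 0 be integers, and for each i ∈ {1,…,n} let t_{i,1}, …, t_{i,q} ∈ ℝ. Suppose the matrix A ∈ ℝ^{n×(qd)} has rows a_i equal to the concatenation of the q Vandermonde rows (1, t_{i,l}, t_{i,l}^2, …, t_{i,l}^{d-1}) for l = 1,…,q. Then there exists a function f : ℝ^{qd} → ℝ^{(p(d-1)+1)^q}, with coordinates indexed by multi-indices κ = (κ_1,…,κ_q) with 0 ≤ κ_l ≤ p(d-1), independent of i, such that for every i and every x ∈ ℝ^{qd}, ⟨a_i, x⟩^p = ∑_{κ} (∏_{l=1}^{q}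 t_{i,l}^{κ_l}) · f(x)_κ. In particular, the rank of the ℓ_p regression problem on a horizontal concatenation of q Vandermonde matrices is at most (p(d-1)+1)^q. -/
/-!
Regard `x` as fixed and the bases `t_{i,l}` as variables: `⟨a_i, x⟩` is then the value at `t_i` of
a polynomial in `q` variables of degree at most `d - 1` in each of them, whose coefficients depend
only on `x`. Its `p`-th power has degree at most `p (d - 1)` in each variable, and `f x` is the
family of its coefficients.
-/

namespace MvPolynomial

variable {R σ : Type*} [CommSemiring R]

theorem degreeOf_X_pow_le (i j : σ) (k : ℕ) : degreeOf i (X j ^ k : MvPolynomial σ R) ≤ k := by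
  classical
  refine degreeOf_le_iff.mpr fun m hm => ?_
  rw [X_pow_eq_monomial] at hm
  rw [Finset.mem_singleton.mp (support_monomial_subset hm), Finsupp.single_apply]
  split_ifs <;> simp

theorem eval_eq_sum_of_degreeOf_le [Fintype σ] [DecidableEq σ] {N : ℕ} (P : MvPolynomial σ R)
    (hP : ∀ i, degreeOf i P ≤ N) (t : σ → R) :
    eval t P = ∑ κ : σ → Fin (N + 1),
      (∏ i, t i ^ (κ i : ℕ)) * coeff (Finsupp.equivFunOnFinite.symm fun i => (κ i : ℕ)) P := by
  rw [eval_eq']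
  symm
  refine Finset.sum_bij_ne_zero (fun κ _ _ => Finsupp.equivFunOnFinite.symm fun i => (κ i : ℕ))
    (fun κ _ h => mem_support_iff.mpr (right_ne_zero_of_mul h)) ?_ ?_ ?_
  · intro κ₁ _ _ κ₂ _ _ h
    funext i
    exact Fin.ext (congrFun (Finsupp.equivFunOnFinite.symm.injective h) i)
  · intro m hm hne
    exact ⟨fun i => ⟨m i, Nat.lt_succ_of_le ((monomial_le_degreeOf i hm).trans (hP i))⟩,
      Finset.mem_univ _, by simpa [mul_comm] using hne, by ext; simp⟩
  · intro κ _ _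
    simp [mul_comm]

end MvPolynomial

open MvPolynomial

noncomputable def blockVandermondeForm {R σ : Type*} [CommSemiring R] [Fintype σ] {d : ℕ}
    (x : σ × Fin d → R) : MvPolynomial σ R :=
  ∑ lj : σ × Fin d, X lj.1 ^ (lj.2 : ℕ) * C (x lj)

section blockVandermondeForm

variable {R σ : Type*} [CommSemiring R] [Fintype σ] {d : ℕ}

theorem eval_blockVandermondeForm (t : σ → R) (x : σ × Fin d → R) :
    eval t (blockVandermondeForm x) = ∑ lj : σ × Fin d, t lj.1 ^ (lj.2 : ℕ) * x lj := by
  simp [blockVandermondeForm]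

theorem degreeOf_blockVandermondeForm_le (x : σ × Fin d → R) (i : σ) :
    degreeOf i (blockVandermondeForm x) ≤ d - 1 := by
  refine (degreeOf_sum_le i _ _).trans (Finset.sup_le fun lj _ => ?_)
  calc degreeOf i (X lj.1 ^ (lj.2 : ℕ) * C (x lj))
      ≤ lj.2 := (degreeOf_mul_C_le _ i _).trans (degreeOf_X_pow_le i lj.1 lj.2)
    _ ≤ d - 1 := Nat.le_sub_one_of_lt lj.2.isLt

end blockVandermondeForm

theorem block_vandermonde_lp_regression_rank_general (n d q p : ℕ)
    (t : Fin n → Fin q → ℝ)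
    (a : Fin n → (Fin q × Fin d → ℝ))
    (ha : ∀ i l j, a i (l, j) = t i l ^ (j : ℕ)) :
    ∃ f : (Fin q × Fin d → ℝ) → ((Fin q → Fin (p * (d - 1) + 1)) → ℝ),
      ∀ (i : Fin n) (x : Fin q × Fin d → ℝ),
        (∑ lj : Fin q × Fin d, a i lj * x lj) ^ p
          = ∑ κ : Fin q → Fin (p * (d - 1) + 1),
              (∏ l : Fin q, t i l ^ ((κ l : ℕ))) * f x κ := by
  refine ⟨fun x κ => coeff (Finsupp.equivFunOnFinite.symm fun l => (κ l : ℕ))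
    (blockVandermondeForm x ^ p), fun i x => ?_⟩
  have hrow : ∑ lj, a i lj * x lj = eval (t i) (blockVandermondeForm x) := by
    simp only [eval_blockVandermondeForm, ha]
  have hdeg (l : Fin q) : degreeOf l (blockVandermondeForm x ^ p) ≤ p * (d - 1) :=
    (degreeOf_pow_le l _ p).trans (Nat.mul_le_mul_left p (degreeOf_blockVandermondeForm_le x l))
  rw [hrow, ← map_pow]
  exact eval_eq_sum_of_degreeOf_le _ hdeg (t i)

/-- If each row `a_i ∈ ℝ^{qd}` is the concatenation of `q`
Vandermonde rows `(1, t_{i,l}, …, t_{i,l}^{d-1})`, `l = 1,…,q`, then there is a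
function `f : ℝ^{qd} → ℝ^{(p(d-1)+1)^q}`, indexed by multi-indices
`κ : {1,…,q} → {0,…,p(d-1)}` and independent of `i`, such that
`⟨a_i, x⟩^p = ∑_κ (∏_l t_{i,l}^{κ_l}) · f(x)_κ`. In particular the rank of
the ℓ_p regression problem on a horizontal concatenation of `q` Vandermonde
matrices is at most `(p(d-1)+1)^q`. -/
theorem block_vandermonde_lp_regression_rank (n d q p : ℕ)
    (hn : 1 ≤ n) (hd : 1 ≤ d) (hq : 1 ≤ q)
    (t : Fin n → Fin q → ℝ)
    (a : Fin n → (Fin q × Fin d → ℝ))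
    (ha : ∀ i l j, a i (l, j) = t i l ^ (j : ℕ)) :
    ∃ f : (Fin q × Fin d → ℝ) → ((Fin q → Fin (p * (d - 1) + 1)) → ℝ),
      ∀ (i : Fin n) (x : Fin q × Fin d → ℝ),
        (∑ lj : Fin q × Fin d, a i lj * x lj) ^ p
          = ∑ κ : Fin q → Fin (p * (d - 1) + 1),
              (∏ l : Fin q, t i l ^ ((κ l : ℕ))) * f x κ :=
  block_vandermonde_lp_regression_rank_general n d q p t a ha
end

section
/- Let p ≥ 1 be a real number, A ∈ ℝ^{n×d}, b ∈ ℝ^n, let x* ∈ ℝ^d be a minimizer of ‖Ax − b‖_p over x ∈ ℝ^d, and set OPT = ‖Ax* − b‖_p. Let S be a random m×n real matrix (a measurable function from a probability space to ℝ^{m×n}) such that almost surely, (11/12)·‖SAy‖_p ≤ ‖Ay‖_p ≤ (13/12)·‖SAy‖_p for all y ∈ ℝ^d, and such that E[‖S(Ax* − b)‖_p^p] = ‖Ax* − b‖_p^p. Then with probability at least 4/5, every vector x ∈ ℝ^d satisfying ‖SAx − Sb‖_p ≤ 5·OPT also satisfies ‖Ax − b‖_p ≤ 12·OPT. -/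
/-!
For every `x`, the triangle inequality and the upper embedding bound applied to `x − x*` give
`‖Ax − b‖_p ≤ (13/12)·(‖SAx − Sb‖_p + ‖S(Ax* − b)‖_p) + OPT`. Markov's inequality for
`‖S(Ax* − b)‖_p^p`, whose mean is `OPT^p`, bounds the probability of `‖S(Ax* − b)‖_p > 5·OPT`
by `5^(-p) ≤ 1/5`. Off that event, `‖SAx − Sb‖_p ≤ 5·OPT` forces
`‖Ax − b‖_p ≤ (13/12)·10·OPT + OPT ≤ 12·OPT`.
-/

open MeasureTheory
open scoped ENNReal

/-- The ℓ_p norm of a vector in ℝ^n, for real `p ≥ 1`: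
`‖y‖_p = (∑ |y_i|^p)^{1/p}` (real exponents). -/
noncomputable def lpNorm {n : ℕ} (p : ℝ) (y : Fin n → ℝ) : ℝ :=
  (∑ i, |y i| ^ p) ^ (1 / p)

open scoped Matrix

section LpNorm

variable {n : ℕ} {p : ℝ}

lemma lpNorm_nonneg (p : ℝ) (y : Fin n → ℝ) : 0 ≤ lpNorm p y :=
  Real.rpow_nonneg (Finset.sum_nonneg fun _ _ => Real.rpow_nonneg (abs_nonneg _) _) _

lemma lpNorm_eq_norm_toLp (hp : 0 < p) (y : Fin n → ℝ) :
    lpNorm p y = ‖WithLp.toLp (ENNReal.ofReal p) y‖ := by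
  have hto : (ENNReal.ofReal p).toReal = p := ENNReal.toReal_ofReal hp.le
  rw [PiLp.norm_eq_sum (by rwa [hto]), hto]
  simp [_root_.lpNorm, Real.norm_eq_abs]

lemma lpNorm_sub_le (hp : 1 ≤ p) (u v : Fin n → ℝ) :
    lpNorm p (u - v) ≤ lpNorm p u + lpNorm p v := by
  have : Fact (1 ≤ ENNReal.ofReal p) := ⟨ENNReal.one_le_ofReal.mpr hp⟩
  simp only [lpNorm_eq_norm_toLp (one_pos.trans_le hp), WithLp.toLp_sub]
  exact norm_sub_le _ _

lemma lpNorm_add_le (hp : 1 ≤ p) (u v : Fin n → ℝ) :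
    lpNorm p (u + v) ≤ lpNorm p u + lpNorm p v := by
  have : Fact (1 ≤ ENNReal.ofReal p) := ⟨ENNReal.one_le_ofReal.mpr hp⟩
  simp only [lpNorm_eq_norm_toLp (one_pos.trans_le hp), WithLp.toLp_add]
  exact norm_add_le _ _

lemma lpNorm_eq_zero_iff (hp : 1 ≤ p) {y : Fin n → ℝ} : lpNorm p y = 0 ↔ y = 0 := by
  have : Fact (1 ≤ ENNReal.ofReal p) := ⟨ENNReal.one_le_ofReal.mpr hp⟩
  rw [lpNorm_eq_norm_toLp (one_pos.trans_le hp), norm_eq_zero, WithLp.toLp_eq_zero]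

end LpNorm

lemma lpNorm_residual_le_of_embedding {n d m : ℕ} {p : ℝ} (hp : 1 ≤ p) (A : Matrix (Fin n) (Fin d) ℝ)
    (b : Fin n → ℝ) (S : Matrix (Fin m) (Fin n) ℝ) (x xstar : Fin d → ℝ) {C : ℝ} (hC : 0 ≤ C)
    (hemb : lpNorm p (A *ᵥ (x - xstar)) ≤ C * lpNorm p ((S * A) *ᵥ (x - xstar))) :
    lpNorm p (A *ᵥ x - b) ≤
      C * (lpNorm p ((S * A) *ᵥ x - S *ᵥ b) + lpNorm p (S *ᵥ (A *ᵥ xstar - b)))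
        + lpNorm p (A *ᵥ xstar - b) := by
  have hsplit : A *ᵥ x - b = A *ᵥ (x - xstar) + (A *ᵥ xstar - b) := by
    rw [Matrix.mulVec_sub]; abel
  have hsketch : (S * A) *ᵥ (x - xstar) = ((S * A) *ᵥ x - S *ᵥ b) - S *ᵥ (A *ᵥ xstar - b) := by
    simp only [Matrix.mulVec_sub, ← Matrix.mulVec_mulVec]; abel
  calc lpNorm p (A *ᵥ x - b)
      ≤ lpNorm p (A *ᵥ (x - xstar)) + lpNorm p (A *ᵥ xstar - b) := hsplit ▸ lpNorm_add_le hp _ _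
    _ ≤ C * (lpNorm p ((S * A) *ᵥ x - S *ᵥ b) + lpNorm p (S *ᵥ (A *ᵥ xstar - b)))
        + lpNorm p (A *ᵥ xstar - b) := by
      gcongr
      exact hemb.trans (mul_le_mul_of_nonneg_left (hsketch ▸ lpNorm_sub_le hp _ _) hC)

lemma measureReal_lt_le_of_integral_rpow_eq {Ω : Type*} [MeasurableSpace Ω] {μ : Measure Ω}
    [IsFiniteMeasure μ] {g : Ω → ℝ} (hg : ∀ ω, 0 ≤ g ω) {p c k : ℝ} (hp : 0 < p) (hc : 0 < c)
    (hk : 0 < k) (hint : ∫ ω, g ω ^ p ∂μ = c ^ p) :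
    μ.real {ω | k * c < g ω} ≤ (k ^ p)⁻¹ := by
  have hcp : 0 < c ^ p := Real.rpow_pos_of_pos hc p
  have hkcp : 0 < (k * c) ^ p := Real.rpow_pos_of_pos (mul_pos hk hc) p
  have hintegrable : Integrable (fun ω => g ω ^ p) μ := by
    by_contra h
    -- otherwise the integral would be the junk value `0`
    rw [integral_undef h] at hint
    exact hcp.ne' hint.symm
  have hmarkov := mul_meas_ge_le_integral_of_nonneg
    (Filter.Eventually.of_forall fun ω => Real.rpow_nonneg (hg ω) p) hintegrable ((k * c) ^ p)
  have hsub : {ω | k * c < g ω} ⊆ {ω | (k * c) ^ p ≤ g ω ^ p} := fun ω hω =>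
    Real.rpow_le_rpow (mul_pos hk hc).le (le_of_lt hω) hp.le
  calc μ.real {ω | k * c < g ω} ≤ μ.real {ω | (k * c) ^ p ≤ g ω ^ p} := measureReal_mono hsub
    _ ≤ c ^ p / (k * c) ^ p := by rw [le_div_iff₀ hkcp, mul_comm]; exact hmarkov.trans hint.le
    _ = (k ^ p)⁻¹ := by
      rw [Real.mul_rpow hk.le hc.le]; field_simp

lemma measure_lpNorm_mulVec_gt_le {Ω : Type*} [MeasurableSpace Ω] {μ : Measure Ω}
    [IsFiniteMeasure μ] {m n : ℕ} {p : ℝ} (hp : 1 ≤ p) (S : Ω → Matrix (Fin m) (Fin n) ℝ)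
    (v : Fin n → ℝ) (hunbiased : ∫ ω, lpNorm p (S ω *ᵥ v) ^ p ∂μ = lpNorm p v ^ p)
    {k : ℝ} (hk : 1 ≤ k) :
    μ {ω | k * lpNorm p v < lpNorm p (S ω *ᵥ v)} ≤ (ENNReal.ofReal k)⁻¹ := by
  rcases eq_or_ne v 0 with rfl | hv
  · have hzero : ∀ {l : ℕ}, lpNorm p (0 : Fin l → ℝ) = 0 := (lpNorm_eq_zero_iff hp).2 rfl
    simp [hzero]
  have hvpos : 0 < lpNorm p v :=
    (lpNorm_nonneg p v).lt_of_ne' (mt (lpNorm_eq_zero_iff hp).1 hv)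
  have hk0 : 0 < k := one_pos.trans_le hk
  have htail := measureReal_lt_le_of_integral_rpow_eq (fun ω => lpNorm_nonneg p (S ω *ᵥ v))
    (one_pos.trans_le hp) hvpos hk0 hunbiased
  rw [← ofReal_measureReal, ← ENNReal.ofReal_inv_of_pos hk0]
  gcongr
  exact htail.trans (inv_anti₀ hk0 (Real.self_le_rpow_of_one_le hk hp))

theorem lp_regression_constant_factor_transfer_prob_general
    {Ω : Type*} [MeasurableSpace Ω] (μ : Measure Ω) [IsProbabilityMeasure μ]
    (n d m : ℕ) (p : ℝ) (hp : 1 ≤ p)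
    (A : Matrix (Fin n) (Fin d) ℝ) (b : Fin n → ℝ)
    (S : Ω → Matrix (Fin m) (Fin n) ℝ)
    (xstar : Fin d → ℝ)
    (hemb : ∀ᵐ ω ∂μ, ∀ y : Fin d → ℝ,
      (11 / 12) * lpNorm p ((S ω * A).mulVec y) ≤ lpNorm p (A.mulVec y) ∧
      lpNorm p (A.mulVec y) ≤ (13 / 12) * lpNorm p ((S ω * A).mulVec y))
    (hunbiased : ∫ ω, (lpNorm p ((S ω).mulVec (A.mulVec xstar - b))) ^ p ∂μ
      = (lpNorm p (A.mulVec xstar - b)) ^ p) :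
    (4 / 5 : ℝ≥0∞) ≤ μ {ω | ∀ x : Fin d → ℝ,
      lpNorm p ((S ω * A).mulVec x - (S ω).mulVec b)
          ≤ 5 * lpNorm p (A.mulVec xstar - b) →
      lpNorm p (A.mulVec x - b) ≤ 12 * lpNorm p (A.mulVec xstar - b)} := by
  set OPT := lpNorm p (A *ᵥ xstar - b)
  set good := {ω | ∀ x : Fin d → ℝ,
      lpNorm p ((S ω * A) *ᵥ x - S ω *ᵥ b) ≤ 5 * OPT → lpNorm p (A *ᵥ x - b) ≤ 12 * OPT}
  set bad := {ω | 5 * OPT < lpNorm p (S ω *ᵥ (A *ᵥ xstar - b))}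
  have hbad : μ bad ≤ 5⁻¹ := by
    simpa using measure_lpNorm_mulVec_gt_le hp S _ hunbiased (k := 5) (by norm_num)
  have hgood : ∀ᵐ ω ∂μ, ω ∉ bad → ω ∈ good := by
    filter_upwards [hemb] with ω hembω (hsmall : ¬ 5 * OPT < _) x hx
    have := lpNorm_residual_le_of_embedding hp A b (S ω) x xstar (by norm_num) (hembω (x - xstar)).2
    linarith [not_lt.1 hsmall, lpNorm_nonneg p (A *ᵥ xstar - b)]
  have hcompl : μ goodᶜ ≤ 5⁻¹ :=
    (measure_mono_ae (hgood.mono fun _ => Not.imp_symm)).trans hbad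
  calc (4 / 5 : ℝ≥0∞) ≤ 1 - 5⁻¹ := by
        rw [ENNReal.le_sub_iff_add_le_right (by simp) (by simp), div_eq_mul_inv, ← add_one_mul]
        norm_num
    _ ≤ μ good := by
      rw [tsub_le_iff_right, ← measure_univ (μ := μ)]
      exact (measure_univ_le_add_compl good).trans (by gcongr)

/-- probabilistic constant-factor transfer lemma. If `S` is a
random `m×n` matrix which almost surely satisfies the two-sided subspace
embedding `(11/12)·‖SAy‖_p ≤ ‖Ay‖_p ≤ (13/12)·‖SAy‖_p` for all `y`, and which
is unbiased on the optimal residual, `E[‖S(Ax*−b)‖_p^p] = ‖Ax*−b‖_p^p`, then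
with probability at least `4/5`, every `x` with `‖SAx − Sb‖_p ≤ 5·OPT`
satisfies `‖Ax − b‖_p ≤ 12·OPT`. -/
theorem lp_regression_constant_factor_transfer_prob
    {Ω : Type*} [MeasurableSpace Ω] (μ : Measure Ω) [IsProbabilityMeasure μ]
    (n d m : ℕ) (p : ℝ) (hp : 1 ≤ p)
    (A : Matrix (Fin n) (Fin d) ℝ) (b : Fin n → ℝ)
    (S : Ω → Matrix (Fin m) (Fin n) ℝ) (hS : Measurable fun ω i j => S ω i j)
    (xstar : Fin d → ℝ)
    (hmin : ∀ x : Fin d → ℝ,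
      lpNorm p (A.mulVec xstar - b) ≤ lpNorm p (A.mulVec x - b))
    (hemb : ∀ᵐ ω ∂μ, ∀ y : Fin d → ℝ,
      (11 / 12) * lpNorm p ((S ω * A).mulVec y) ≤ lpNorm p (A.mulVec y) ∧
      lpNorm p (A.mulVec y) ≤ (13 / 12) * lpNorm p ((S ω * A).mulVec y))
    (hunbiased : ∫ ω, (lpNorm p ((S ω).mulVec (A.mulVec xstar - b))) ^ p ∂μ
      = (lpNorm p (A.mulVec xstar - b)) ^ p) :
    (4 / 5 : ℝ≥0∞) ≤ μ {ω | ∀ x : Fin d → ℝ,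
      lpNorm p ((S ω * A).mulVec x - (S ω).mulVec b)
          ≤ 5 * lpNorm p (A.mulVec xstar - b) →
      lpNorm p (A.mulVec x - b) ≤ 12 * lpNorm p (A.mulVec xstar - b)} :=
  lp_regression_constant_factor_transfer_prob_general μ n d m p hp A b S xstar hemb hunbiased
end

section
/- Let n ≥ 2, ε ∈ (0,1), and let b ∈ ℝ^n be a nonzero vector. Set M = max_{1≤i≤n} |b_i|, and define x ∈ ℝ^n by: x_i = 0 if b_i = 0; otherwise x_i = sgn(b_i) · (1+ε)^{⌊log_{1+ε} |b_i|⌋} unless |x_i| ≤ M/n^5, in which case x_i = 0. Then the set of values {x_1, …, x_n} ⊆ ℝ has cardinality at most 2·⌈5·(ln n)/ln(1+ε)⌉ + 1. In particular, the number of distinct values taken by the output of RoundTrunc is O((log n)/ε). -/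
/-!
Write `r = 1 + ε`. A surviving entry has magnitude `r ^ k` with `k = ⌊log_r |b_i|⌋`; since
`|b_i| ≤ M` we get `k ≤ ⌊log_r M⌋`, and since the entry was not truncated, `M / n^5 < r ^ k`, so
`k > log_r M - log_r n^5`. Hence `k` ranges over `⌈log_r n^5⌉ = ⌈5 ln n / ln r⌉` consecutive
integers, each giving at most the two values `± r ^ k`, plus the value `0`.
-/

open Finset

theorem card_le_two_mul_card_add_one_of_abs_mem {G : Type*} [AddCommGroup G] [LinearOrder G]
    [IsOrderedAddMonoid G] {T A : Finset G} (h : ∀ y ∈ T, y ≠ 0 → |y| ∈ A) :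
    #T ≤ 2 * #A + 1 := by
  have hsub : T ⊆ insert 0 (A ∪ A.image Neg.neg) := by
    intro y hy
    by_cases hy0 : y = 0
    · simp [hy0]
    have hA := h y hy hy0
    rcases abs_choice y with hpos | hneg
    · exact mem_insert_of_mem (mem_union_left _ (hpos ▸ hA))
    · exact mem_insert_of_mem (mem_union_right _ (mem_image.mpr ⟨|y|, hA, by simp [hneg]⟩))
  calc #T ≤ #(A ∪ A.image Neg.neg) + 1 := (card_le_card hsub).trans (card_insert_le _ _)
    _ ≤ #A + #A + 1 := by grw [card_union_le, card_image_le]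
    _ = 2 * #A + 1 := by ring

namespace Real

theorem floor_logb_mem_Icc_of_div_lt_zpow {r c y M : ℝ} (hr : 1 < r) (hc : 0 < c) (hy : 0 < y)
    (hyM : y ≤ M) (hlt : M / c < r ^ ⌊logb r y⌋) :
    ⌊logb r y⌋ ∈ Icc (⌊logb r M⌋ - ⌈logb r c⌉₊ + 1) ⌊logb r M⌋ := by
  have hM : 0 < M := hy.trans_le hyM
  have hlogb : logb r (M / c) < ⌊logb r y⌋ := by
    rwa [logb_lt_iff_lt_rpow hr (div_pos hM hc), rpow_intCast]
  have hlow : (⌊logb r M⌋ : ℝ) - ⌈logb r c⌉₊ < ⌊logb r y⌋ := by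
    rw [logb_div hM.ne' hc.ne'] at hlogb
    linarith [Int.floor_le (logb r M), Nat.le_ceil (logb r c)]
  refine mem_Icc.mpr ⟨?_, Int.floor_le_floor (logb_le_logb_of_le hr hy hyM)⟩
  have : ⌊logb r M⌋ - (⌈logb r c⌉₊ : ℤ) < ⌊logb r y⌋ := by exact_mod_cast hlow
  omega

end Real

theorem roundTrunc_distinct_values_general (n : ℕ) (ε : ℝ)
    (hε : ε ∈ Set.Ioo (0 : ℝ) 1)
    (b : Fin n → ℝ)
    (M : ℝ) (hM : M = ⨆ i, |b i|)
    (x : Fin n → ℝ)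
    (hx : ∀ i, x i =
      if b i = 0 then 0
      else if |Real.sign (b i) * (1 + ε) ^ ⌊Real.logb (1 + ε) |b i|⌋| ≤ M / (n : ℝ) ^ 5
        then 0
        else Real.sign (b i) * (1 + ε) ^ ⌊Real.logb (1 + ε) |b i|⌋) :
    (Finset.univ.image x).card
      ≤ 2 * ⌈5 * Real.log n / Real.log (1 + ε)⌉₊ + 1 := by
  have hr : 1 < 1 + ε := by linarith [hε.1]
  have hlog : 5 * Real.log n / Real.log (1 + ε) = Real.logb (1 + ε) ((n : ℝ) ^ 5) := by
    rw [Real.logb_pow, Real.logb]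
    push_cast
    ring
  rw [hlog]
  set K := ⌊Real.logb (1 + ε) M⌋
  set N := ⌈Real.logb (1 + ε) ((n : ℝ) ^ 5)⌉₊
  have hcard : #((Icc (K - N + 1) K).image ((1 + ε) ^ ·)) ≤ N :=
    card_image_le.trans (by simp)
  refine (card_le_two_mul_card_add_one_of_abs_mem fun y hy hy0 => ?_).trans (by gcongr)
  obtain ⟨i, -, rfl⟩ := mem_image.mp hy
  rw [hx i] at hy0 ⊢
  split_ifs at hy0 ⊢ with hbi htrunc
  · exact absurd rfl hy0
  · exact absurd rfl hy0
  set k := ⌊Real.logb (1 + ε) |b i|⌋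
  have habs : |Real.sign (b i) * (1 + ε) ^ k| = (1 + ε) ^ k := by
    rcases Real.sign_apply_eq_of_ne_zero _ hbi with h | h <;>
      simp [h, abs_of_pos (zpow_pos (zero_lt_one.trans hr) _)]
  rw [habs] at htrunc ⊢
  have hbM : |b i| ≤ M := hM ▸ le_ciSup (Set.finite_range fun j ↦ |b j|).bddAbove i
  have hn : (0 : ℝ) < n ^ 5 := by have := i.pos; positivity
  exact mem_image_of_mem _ <| Real.floor_logb_mem_Icc_of_div_lt_zpow hr hn (abs_pos.mpr hbi) hbM
    (not_le.mp htrunc)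

/-- distinct-value bound for the `RoundTrunc` procedure. With
`M = max_i |b_i|`, and `x` obtained from `b` by rounding each nonzero entry
down in magnitude to the nearest power of `1+ε` (keeping the sign), and
truncating to `0` any entry whose rounded magnitude is at most `M/n^5`,
the set of values taken by `x` has cardinality at most
`2·⌈5·(ln n)/ln(1+ε)⌉ + 1 = O((log n)/ε)`. -/
theorem roundTrunc_distinct_values (n : ℕ) (hn : 2 ≤ n) (ε : ℝ)
    (hε : ε ∈ Set.Ioo (0 : ℝ) 1)
    (b : Fin n → ℝ) (hb : b ≠ 0)
    (M : ℝ) (hM : M = ⨆ i, |b i|)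
    (x : Fin n → ℝ)
    (hx : ∀ i, x i =
      if b i = 0 then 0
      else if |Real.sign (b i) * (1 + ε) ^ ⌊Real.logb (1 + ε) |b i|⌋| ≤ M / (n : ℝ) ^ 5
        then 0
        else Real.sign (b i) * (1 + ε) ^ ⌊Real.logb (1 + ε) |b i|⌋) :
    (Finset.univ.image x).card
      ≤ 2 * ⌈5 * Real.log n / Real.log (1 + ε)⌉₊ + 1 :=
  roundTrunc_distinct_values_general n ε hε b M hM x hx
end
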